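/- arXiv:2407.15183 — 2 statements merged into one kernel-verified Lean document; each statement's English description precedes it below -/
import Mathlib

section
/- Given α ∈ {0, 1} and an integer u ≥ 1, there exists a family of u integer matrices of size 3 × 3 such that: the absolute values of all 9u entries (over all matrices) are pairwise distinct and their set is exactly [4α+9, 2u+4α+7]₂ ∪ [2u+4α+8, 3u+4α+7] ∪ [3u+8α+16, 5u+8α+15] ∪ [5u+12α+24, 6u+12α+23] ∪ [6u+12α+25, 8u+12α+23]₂ ∪ [9u+16α+32, 10u+16α+31] ∪ [11u+20α+40, 12u+20α+39] ∪ [14u+28α+56, 16u+28α+54]₂; and every matrix in the family has all row sums and all column sums equal to 0. -/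
/-!
The `l`-th matrix (`0 ≤ l < u`) is `D B D` with `D = diag σ`, `σ = (1, 1, -1)`, and
`B = baseMatrix α u l` a matrix of nonnegative entries, each affine in `l`. In every row and column
of `B` the entry at the position that `D` negates is the sum of the other two, i.e. `B σ = 0` and
`σᵀ B = 0`, which is exactly the vanishing of the row and column sums of `D B D`. As `l` runs
through `[0, u)`, each entry of `B` sweeps out an arithmetic progression of step `1` or `2`; the
nine progressions lie in pairwise disjoint intervals and make up the prescribed set, the
progressions at positions `(0, 2)` and `(1, 0)` joining into a single interval.
-/

/-- `iSet d a b` is the set `[a, b]_d = {a, a + d, a + 2d, …, b}` (the integers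
`x` with `a ≤ x ≤ b` and `x ≡ a (mod d)`). -/
def iSet (d a b : ℤ) : Set ℤ := {x | a ≤ x ∧ x ≤ b ∧ d ∣ (x - a)}

open Matrix

section SignedMatrix

variable {n R : Type*} [Fintype n] [DecidableEq n]

theorem sum_diagonal_mul_mul_diagonal_row_eq_zero [NonUnitalSemiring R] {σ : n → R} {B : Matrix n n R}
    (hB : B *ᵥ σ = 0) (i : n) : ∑ j, (diagonal σ * B * diagonal σ) i j = 0 := by
  have h := congrFun hB i
  simp only [mulVec, dotProduct, Pi.zero_apply] at h
  simp only [mul_diagonal, diagonal_mul, mul_assoc, ← Finset.mul_sum, h, mul_zero]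

theorem sum_diagonal_mul_mul_diagonal_col_eq_zero [NonUnitalSemiring R] {σ : n → R} {B : Matrix n n R}
    (hB : σ ᵥ* B = 0) (j : n) : ∑ i, (diagonal σ * B * diagonal σ) i j = 0 := by
  have h := congrFun hB j
  simp only [vecMul, dotProduct, Pi.zero_apply] at h
  simp only [mul_diagonal, diagonal_mul, ← Finset.sum_mul, h, zero_mul]

theorem abs_diagonal_mul_mul_diagonal_apply [Ring R] [LinearOrder R] [IsStrictOrderedRing R]
    {σ : n → R} (hσ : ∀ i, |σ i| = 1) (B : Matrix n n R) (i j : n) :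
    |(diagonal σ * B * diagonal σ) i j| = |B i j| := by
  simp only [mul_diagonal, diagonal_mul, abs_mul, hσ, one_mul, mul_one]

end SignedMatrix

theorem mem_iSet_iff_exists_add_mul {d a b : ℤ} {u : ℕ} (hd : 0 < d) (hb : b = a + d * (u - 1))
    (x : ℤ) : x ∈ iSet d a b ↔ ∃ l : Fin u, a + d * l = x := by
  constructor
  · rintro ⟨hax, hxb, k, hk⟩
    have hk0 : 0 ≤ k := le_of_mul_le_mul_left (by linarith) hd
    have hku : k ≤ u - 1 := le_of_mul_le_mul_left (by linarith) hd
    exact ⟨⟨k.toNat, by omega⟩, by simp only [Int.toNat_of_nonneg hk0]; linarith⟩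
  · rintro ⟨l, rfl⟩
    have hl : (l : ℤ) ≤ u - 1 := by have := l.isLt; omega
    refine ⟨le_add_of_nonneg_right (by positivity), ?_, ⟨l, by ring⟩⟩
    rw [hb]
    exact add_le_add_right (mul_le_mul_of_nonneg_left hl hd.le) a

theorem mem_iSet_one_iff_exists_sub {a b : ℤ} {u : ℕ} (ha : a = b - u + 1) (x : ℤ) :
    x ∈ iSet 1 a b ↔ ∃ l : Fin u, b - l = x := by
  constructor
  · rintro ⟨hax, hxb, -⟩
    exact ⟨⟨(b - x).toNat, by omega⟩, by simp only; omega⟩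
  · rintro ⟨l, rfl⟩
    have := l.isLt
    exact ⟨by omega, by omega, one_dvd _⟩

theorem mem_iSet_one_iff_exists_add {a b : ℤ} {u : ℕ} (hb : b = a + u - 1) (x : ℤ) :
    x ∈ iSet 1 a b ↔ ∃ l : Fin u, a + l = x := by
  constructor
  · rintro ⟨hax, hxb, -⟩
    exact ⟨⟨(x - a).toNat, by omega⟩, by simp only; omega⟩
  · rintro ⟨l, rfl⟩
    have := l.isLt
    exact ⟨by omega, by omega, one_dvd _⟩

theorem iSet_one_union_iSet_one {a b c d : ℤ} (hc : c = b + 1) (hac : a ≤ c) (hbd : b ≤ d) :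
    iSet 1 a b ∪ iSet 1 c d = iSet 1 a d := by
  ext x
  simp only [iSet, Set.mem_union, Set.mem_ofPred_eq, one_dvd, and_true]
  omega

def signVec : Fin 3 → ℤ := ![1, 1, -1]

def baseMatrix (α u l : ℤ) : Matrix (Fin 3) (Fin 3) ℤ :=
  !![4 * α + 9 + 2 * l, 3 * u + 4 * α + 7 - l, 3 * u + 8 * α + 16 + l;
     5 * u + 8 * α + 15 - l, 6 * u + 12 * α + 25 + 2 * l, 11 * u + 20 * α + 40 + l;
     5 * u + 12 * α + 24 + l, 9 * u + 16 * α + 32 + l, 14 * u + 28 * α + 56 + 2 * l]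

theorem abs_signVec (i : Fin 3) : |signVec i| = 1 := by
  fin_cases i <;> rfl

theorem baseMatrix_mulVec_signVec (α u l : ℤ) : baseMatrix α u l *ᵥ signVec = 0 := by
  ext i
  fin_cases i <;>
    simp only [baseMatrix, signVec, mulVec, vec3_dotProduct, of_apply, Fin.zero_eta, Fin.mk_one,
      Fin.reduceFinMk, Fin.isValue, cons_val_zero, cons_val_one, cons_val_two, tail_cons, head_cons,
      Pi.zero_apply] <;>
    ring

theorem signVec_vecMul_baseMatrix (α u l : ℤ) : signVec ᵥ* baseMatrix α u l = 0 := by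
  ext j
  fin_cases j <;>
    simp only [baseMatrix, signVec, vecMul, vec3_dotProduct, of_apply, Fin.zero_eta, Fin.mk_one,
      Fin.reduceFinMk, Fin.isValue, cons_val_zero, cons_val_one, cons_val_two, tail_cons, head_cons,
      Pi.zero_apply] <;>
    ring

theorem baseMatrix_nonneg {α u l : ℤ} (hα : -2 ≤ α) (hl : 0 ≤ l) (hlu : l < u) (i j : Fin 3) :
    0 ≤ baseMatrix α u l i j := by
  fin_cases i <;> fin_cases j <;>
    simp only [baseMatrix, of_apply, Fin.zero_eta, Fin.mk_one, Fin.reduceFinMk, Fin.isValue,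
      cons_val_zero, cons_val_one, cons_val_two, tail_cons, head_cons] <;>
    omega

theorem baseMatrix_injective {α : ℤ} (hα : -2 ≤ α) (u : ℕ) :
    Function.Injective (fun p : Fin u × Fin 3 × Fin 3 => baseMatrix α u p.1 p.2.1 p.2.2) := by
  rintro ⟨l, i, j⟩ ⟨l', i', j'⟩ h
  have := l.isLt
  have := l'.isLt
  fin_cases i <;> fin_cases j <;> fin_cases i' <;> fin_cases j' <;>
    simp only [baseMatrix, of_apply, Fin.zero_eta, Fin.mk_one, Fin.reduceFinMk, Fin.isValue,
      cons_val_zero, cons_val_one, cons_val_two, tail_cons, head_cons, Prod.mk.injEq, Fin.ext_iff,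
      Fin.val_zero, Fin.val_one, Fin.val_two, and_true] at h ⊢ <;>
    omega

theorem setOf_baseMatrix_eq (α : ℤ) (u : ℕ) :
    {x : ℤ | ∃ (l : Fin u) (i j : Fin 3), baseMatrix α u l i j = x} =
      iSet 2 (4 * α + 9) (2 * (u : ℤ) + 4 * α + 7) ∪
      iSet 1 (2 * (u : ℤ) + 4 * α + 8) (3 * (u : ℤ) + 4 * α + 7) ∪
      iSet 1 (3 * (u : ℤ) + 8 * α + 16) (5 * (u : ℤ) + 8 * α + 15) ∪
      iSet 1 (5 * (u : ℤ) + 12 * α + 24) (6 * (u : ℤ) + 12 * α + 23) ∪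
      iSet 2 (6 * (u : ℤ) + 12 * α + 25) (8 * (u : ℤ) + 12 * α + 23) ∪
      iSet 1 (9 * (u : ℤ) + 16 * α + 32) (10 * (u : ℤ) + 16 * α + 31) ∪
      iSet 1 (11 * (u : ℤ) + 20 * α + 40) (12 * (u : ℤ) + 20 * α + 39) ∪
      iSet 2 (14 * (u : ℤ) + 28 * α + 56) (16 * (u : ℤ) + 28 * α + 54) := by
  rw [← iSet_one_union_iSet_one (a := 3 * u + 8 * α + 16) (b := 4 * u + 8 * α + 15)
    (c := 4 * u + 8 * α + 16) (d := 5 * u + 8 * α + 15) (by ring) (by omega) (by omega)]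
  ext x
  simp only [baseMatrix, of_apply, cons_val', cons_val_fin_one, Fin.exists_fin_succ, Fin.isValue,
    cons_val_zero, cons_val_succ, exists_const, exists_or, Set.mem_ofPred_eq, Set.mem_union]
  rw [mem_iSet_iff_exists_add_mul two_pos (by ring), mem_iSet_one_iff_exists_sub (by ring),
    mem_iSet_one_iff_exists_add (by ring), mem_iSet_one_iff_exists_sub (by ring),
    mem_iSet_one_iff_exists_add (by ring), mem_iSet_iff_exists_add_mul two_pos (by ring),
    mem_iSet_one_iff_exists_add (by ring), mem_iSet_one_iff_exists_add (by ring),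
    mem_iSet_iff_exists_add_mul two_pos (by ring)]
  tauto

theorem exists_A_three_alpha_general
    (α : ℤ) (hα : α = 0 ∨ α = 1) (u : ℕ) :
    ∃ A : Fin u → Matrix (Fin 3) (Fin 3) ℤ,
      Function.Injective (fun p : Fin u × Fin 3 × Fin 3 => |A p.1 p.2.1 p.2.2|) ∧
      {x : ℤ | ∃ l i j, |A l i j| = x} =
        iSet 2 (4 * α + 9) (2 * (u : ℤ) + 4 * α + 7) ∪
        iSet 1 (2 * (u : ℤ) + 4 * α + 8) (3 * (u : ℤ) + 4 * α + 7) ∪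
        iSet 1 (3 * (u : ℤ) + 8 * α + 16) (5 * (u : ℤ) + 8 * α + 15) ∪
        iSet 1 (5 * (u : ℤ) + 12 * α + 24) (6 * (u : ℤ) + 12 * α + 23) ∪
        iSet 2 (6 * (u : ℤ) + 12 * α + 25) (8 * (u : ℤ) + 12 * α + 23) ∪
        iSet 1 (9 * (u : ℤ) + 16 * α + 32) (10 * (u : ℤ) + 16 * α + 31) ∪
        iSet 1 (11 * (u : ℤ) + 20 * α + 40) (12 * (u : ℤ) + 20 * α + 39) ∪
        iSet 2 (14 * (u : ℤ) + 28 * α + 56) (16 * (u : ℤ) + 28 * α + 54) ∧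
      (∀ l i, ∑ j, A l i j = 0) ∧
      (∀ l j, ∑ i, A l i j = 0) := by
  have hα : -2 ≤ α := by omega
  set A : Fin u → Matrix (Fin 3) (Fin 3) ℤ :=
    fun l => diagonal signVec * baseMatrix α u l * diagonal signVec
  have habs (l : Fin u) (i j : Fin 3) : |A l i j| = baseMatrix α u l i j := by
    rw [abs_diagonal_mul_mul_diagonal_apply abs_signVec, abs_of_nonneg]
    exact baseMatrix_nonneg hα (by positivity) (by exact_mod_cast l.isLt) i j
  refine ⟨A, ?_, ?_,
    fun l => sum_diagonal_mul_mul_diagonal_row_eq_zero (baseMatrix_mulVec_signVec _ _ _),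
    fun l => sum_diagonal_mul_mul_diagonal_col_eq_zero (signVec_vecMul_baseMatrix _ _ _)⟩
  · simpa only [habs] using baseMatrix_injective hα u
  · simpa only [habs] using setOf_baseMatrix_eq α u

theorem exists_A_three_alpha
    (α : ℤ) (hα : α = 0 ∨ α = 1) (u : ℕ) (hu : 1 ≤ u) :
    ∃ A : Fin u → Matrix (Fin 3) (Fin 3) ℤ,
      Function.Injective (fun p : Fin u × Fin 3 × Fin 3 => |A p.1 p.2.1 p.2.2|) ∧
      {x : ℤ | ∃ l i j, |A l i j| = x} =
        iSet 2 (4 * α + 9) (2 * (u : ℤ) + 4 * α + 7) ∪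
        iSet 1 (2 * (u : ℤ) + 4 * α + 8) (3 * (u : ℤ) + 4 * α + 7) ∪
        iSet 1 (3 * (u : ℤ) + 8 * α + 16) (5 * (u : ℤ) + 8 * α + 15) ∪
        iSet 1 (5 * (u : ℤ) + 12 * α + 24) (6 * (u : ℤ) + 12 * α + 23) ∪
        iSet 2 (6 * (u : ℤ) + 12 * α + 25) (8 * (u : ℤ) + 12 * α + 23) ∪
        iSet 1 (9 * (u : ℤ) + 16 * α + 32) (10 * (u : ℤ) + 16 * α + 31) ∪
        iSet 1 (11 * (u : ℤ) + 20 * α + 40) (12 * (u : ℤ) + 20 * α + 39) ∪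
        iSet 2 (14 * (u : ℤ) + 28 * α + 56) (16 * (u : ℤ) + 28 * α + 54) ∧
      (∀ l i, ∑ j, A l i j = 0) ∧
      (∀ l j, ∑ i, A l i j = 0) :=
  exists_A_three_alpha_general α hα u
end

section
/- Given δ ∈ {0, 1} and three nonnegative integers b, ℓ, u, there exists a family 𝔅 of 2 × 3 integer matrices that is the disjoint union of two subfamilies 𝔅′ and 𝔅″ such that: |𝔅′| = 2ℓ and |𝔅″| = 2u; every matrix in 𝔅′ has row sums (0, 0) and column sums (−2, 1, 1); every matrix in 𝔅″ has row sums (0, 0) and column sums (−4, 2, 2); and the absolute values of all entries of 𝔅 are pairwise distinct with set exactly [2b+1, 2b+8u+8ℓ−1]₂ ∪ [2b+8u+8ℓ+δ, 2b+12u+12ℓ+δ−1] ∪ [4b+12u+12ℓ+δ, 4b+16u+16ℓ+δ−1]. -/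
theorem iSet_eq_image {d a b : ℤ} (hd : 0 < d) {n : ℕ} (hlo : a + d * n ≤ b + d)
    (hhi : b < a + d * n) :
    iSet d a b = ((Finset.range n).image fun k : ℕ => a + d * k : Set ℤ) := by
  ext x
  simp only [iSet, Set.mem_ofPred_eq, Finset.coe_image, Finset.coe_range, Set.mem_image,
    Set.mem_Iio]
  constructor
  · rintro ⟨hax, hxb, c, hc⟩
    have hc0 : 0 ≤ c := nonneg_of_mul_nonneg_right (by omega) hd
    have hcn : c < n := lt_of_mul_lt_mul_left (by omega) hd.le
    exact ⟨c.toNat, by omega, by rw [Int.toNat_of_nonneg hc0]; omega⟩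
  · rintro ⟨k, hk, rfl⟩
    have hk0 : 0 ≤ d * k := by positivity
    have hkn : d * k ≤ d * n - d := by
      rw [← mul_sub_one]; exact mul_le_mul_of_nonneg_left (by omega) hd.le
    exact ⟨by omega, by omega, k, by ring⟩

theorem iSet_ncard {d a b : ℤ} (hd : 0 < d) {n : ℕ} (hlo : a + d * n ≤ b + d)
    (hhi : b < a + d * n) : (iSet d a b).ncard = n := by
  rw [iSet_eq_image hd hlo hhi, Set.ncard_coe_finset,
    Finset.card_image_of_injective _ fun k k' h => by simpa [hd.ne'] using h, Finset.card_range]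

theorem iSet_finite (d a b : ℤ) : (iSet d a b).Finite :=
  (Set.finite_Icc a b).subset fun _ hx => ⟨hx.1, hx.2.1⟩

theorem iSet_disjoint {d a b d' a' b' : ℤ} (h : b < a') :
    Disjoint (iSet d a b) (iSet d' a' b') :=
  Set.disjoint_left.2 fun _ hx hx' => by have := hx.2.1; have := hx'.1; omega

def zeroRowSumMatrix (x y f : ℤ) : Matrix (Fin 2) (Fin 3) ℤ :=
  !![x, y, -(x + y); -(x + 2 * f), f - y, x + y + f]

theorem zeroRowSumMatrix_row_sum (x y f : ℤ) (i : Fin 2) :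
    ∑ j, zeroRowSumMatrix x y f i j = 0 := by
  fin_cases i <;> simp [zeroRowSumMatrix, Fin.sum_univ_three]; ring

theorem zeroRowSumMatrix_col_sums (x y f : ℤ) :
    ∑ i, zeroRowSumMatrix x y f i 0 = -(2 * f) ∧ ∑ i, zeroRowSumMatrix x y f i 1 = f ∧
      ∑ i, zeroRowSumMatrix x y f i 2 = f := by
  refine ⟨?_, ?_, ?_⟩ <;> simp [zeroRowSumMatrix, Fin.sum_univ_two]; ring

theorem abs_zeroRowSumMatrix {x y f : ℤ} (hx : 0 ≤ x) (hf : 0 ≤ f) (hfy : f ≤ y) (i : Fin 2) :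
    |zeroRowSumMatrix x y f i 0| = x + 2 * f * i ∧ |zeroRowSumMatrix x y f i 1| = y - f * i ∧
      |zeroRowSumMatrix x y f i 2| = x + y + f * i := by
  fin_cases i <;> simp [zeroRowSumMatrix, abs_eq_max_neg] <;> omega

-- On `𝔅″` write `p = 2q + r` with `r < 2`: the first-column values `x, x + 4` for `r = 0, 1`
-- are then the eight odd numbers from `2b + 8ℓ + 8q + 1` on.
def familyBx (b l u : ℕ) : Fin (2 * l) ⊕ Fin (2 * u) → ℤ
  | .inl k => 2 * b + 1 + 4 * k
  | .inr p => 2 * b + 8 * l + 1 + 8 * (p / 2 : ℕ) + 2 * (p % 2 : ℕ)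

def familyBy (δ : ℤ) (b l u : ℕ) : Fin (2 * l) ⊕ Fin (2 * u) → ℤ
  | .inl k => 2 * b + 12 * u + 12 * l + δ - 1 - 2 * k
  | .inr p => 2 * b + 12 * u + 8 * l + δ - 1 - 4 * (p / 2 : ℕ) - (p % 2 : ℕ)

def familyB (δ : ℤ) (b l u : ℕ) (p : Fin (2 * l) ⊕ Fin (2 * u)) : Matrix (Fin 2) (Fin 3) ℤ :=
  zeroRowSumMatrix (familyBx b l u p) (familyBy δ b l u p) (Sum.elim 1 2 p)

theorem abs_familyB {δ : ℤ} (hδ : 0 ≤ δ) (b l u : ℕ) (p : Fin (2 * l) ⊕ Fin (2 * u))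
    (i : Fin 2) :
    let x := familyBx b l u p; let y := familyBy δ b l u p; let f : ℤ := Sum.elim 1 2 p
    |familyB δ b l u p i 0| = x + 2 * f * i ∧ |familyB δ b l u p i 1| = y - f * i ∧
      |familyB δ b l u p i 2| = x + y + f * i := by
  apply abs_zeroRowSumMatrix <;> rcases p with ⟨k, hk⟩ | ⟨k, hk⟩ <;>
    simp [familyBx, familyBy] <;> omega

def supportPiece (δ : ℤ) (b l u : ℕ) : Fin 3 → Set ℤ :=
  ![iSet 2 (2 * (b : ℤ) + 1) (2 * (b : ℤ) + 8 * (u : ℤ) + 8 * (l : ℤ) - 1),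
    iSet 1 (2 * (b : ℤ) + 8 * (u : ℤ) + 8 * (l : ℤ) + δ)
      (2 * (b : ℤ) + 12 * (u : ℤ) + 12 * (l : ℤ) + δ - 1),
    iSet 1 (4 * (b : ℤ) + 12 * (u : ℤ) + 12 * (l : ℤ) + δ)
      (4 * (b : ℤ) + 16 * (u : ℤ) + 16 * (l : ℤ) + δ - 1)]

theorem supportPiece_pairwise_disjoint {δ : ℤ} (hδ : 0 ≤ δ) (b l u : ℕ) :
    Pairwise (Function.onFun Disjoint (supportPiece δ b l u)) := by
  intro j j' hjj'
  fin_cases j <;> fin_cases j' <;> first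
    | exact absurd rfl hjj'
    | exact iSet_disjoint (by omega)
    | exact (iSet_disjoint (by omega)).symm

theorem supportPiece_finite (δ : ℤ) (b l u : ℕ) (j : Fin 3) :
    (supportPiece δ b l u j).Finite := by
  fin_cases j <;> exact iSet_finite _ _ _

theorem supportPiece_ncard (δ : ℤ) (b l u : ℕ) (j : Fin 3) :
    (supportPiece δ b l u j).ncard = 4 * (u + l) := by
  fin_cases j <;> exact iSet_ncard (by norm_num) (by push_cast; omega) (by push_cast; omega)

theorem abs_familyB_mem_supportPiece {δ : ℤ} (hδ : 0 ≤ δ) (b l u : ℕ)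
    (p : Fin (2 * l) ⊕ Fin (2 * u)) (i : Fin 2) (j : Fin 3) :
    |familyB δ b l u p i j| ∈ supportPiece δ b l u j := by
  have hi := i.isLt
  obtain ⟨h0, h1, h2⟩ := abs_familyB hδ b l u p i
  fin_cases j <;> simp only [Fin.zero_eta, Fin.mk_one, Fin.reduceFinMk, h0, h1, h2] <;>
    rcases p with ⟨k, hk⟩ | ⟨k, hk⟩ <;> simp [supportPiece, iSet, familyBx, familyBy] <;> omega

theorem familyB_abs_injective_column {δ : ℤ} (hδ : 0 ≤ δ) (b l u : ℕ) (j : Fin 3) :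
    Function.Injective
      (fun q : (Fin (2 * l) ⊕ Fin (2 * u)) × Fin 2 => |familyB δ b l u q.1 q.2 j|) := by
  rintro ⟨p, i⟩ ⟨p', i'⟩ h
  have hi := i.isLt
  have hi' := i'.isLt
  obtain ⟨h0, h1, h2⟩ := abs_familyB hδ b l u p i
  obtain ⟨h0', h1', h2'⟩ := abs_familyB hδ b l u p' i'
  fin_cases j <;>
    simp only [Fin.zero_eta, Fin.mk_one, Fin.reduceFinMk, h0, h1, h2, h0', h1', h2'] at h <;>
    rcases p with ⟨k, hk⟩ | ⟨k, hk⟩ <;> rcases p' with ⟨k', hk'⟩ | ⟨k', hk'⟩ <;>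
    simp [familyBx, familyBy, Prod.ext_iff, Fin.ext_iff] at h ⊢ <;> omega

theorem familyB_abs_injective {δ : ℤ} (hδ : 0 ≤ δ) (b l u : ℕ) :
    Function.Injective (fun q : (Fin (2 * l) ⊕ Fin (2 * u)) × Fin 2 × Fin 3 =>
      |familyB δ b l u q.1 q.2.1 q.2.2|) := by
  rintro ⟨p, i, j⟩ ⟨p', i', j'⟩ h
  dsimp only at h
  obtain rfl : j = j' := by
    by_contra hjj'
    exact Set.disjoint_left.1 (supportPiece_pairwise_disjoint hδ b l u hjj')
      (abs_familyB_mem_supportPiece hδ b l u p i j)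
      (h ▸ abs_familyB_mem_supportPiece hδ b l u p' i' j')
  obtain ⟨rfl, rfl⟩ := Prod.mk.inj (familyB_abs_injective_column hδ b l u j (a₁ := (p, i))
    (a₂ := (p', i')) h)
  rfl

theorem familyB_abs_range {δ : ℤ} (hδ : 0 ≤ δ) (b l u : ℕ) :
    {x : ℤ | ∃ p i j, |familyB δ b l u p i j| = x} =
      supportPiece δ b l u 0 ∪ supportPiece δ b l u 1 ∪ supportPiece δ b l u 2 := by
  have hrange : {x : ℤ | ∃ p i j, |familyB δ b l u p i j| = x} =
      Set.range (fun q : (Fin (2 * l) ⊕ Fin (2 * u)) × Fin 2 × Fin 3 =>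
        |familyB δ b l u q.1 q.2.1 q.2.2|) := by
    ext x
    simp [Prod.exists]
  have hdisj := supportPiece_pairwise_disjoint hδ b l u
  rw [hrange]
  have hfin := supportPiece_finite δ b l u
  refine Set.eq_of_subset_of_ncard_le ?_ ?_ (((hfin 0).union (hfin 1)).union (hfin 2))
  · rintro _ ⟨⟨p, i, j⟩, rfl⟩
    have hmem := abs_familyB_mem_supportPiece hδ b l u p i j
    fin_cases j <;> simp_all
  · have h01 : (0 : Fin 3) ≠ 1 := by decide
    have h02 : (0 : Fin 3) ≠ 2 := by decide
    have h12 : (1 : Fin 3) ≠ 2 := by decide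
    rw [Set.ncard_union_eq (Set.disjoint_union_left.2 ⟨hdisj h02, hdisj h12⟩)
      ((hfin 0).union (hfin 1)) (hfin 2), Set.ncard_union_eq (hdisj h01) (hfin 0) (hfin 1),
      supportPiece_ncard, supportPiece_ncard, supportPiece_ncard,
      Set.ncard_range_of_injective (familyB_abs_injective hδ b l u)]
    simp only [Nat.card_eq_fintype_card, Fintype.card_prod, Fintype.card_sum, Fintype.card_fin]
    omega

theorem exists_B_delta
    (δ : ℤ) (hδ : δ = 0 ∨ δ = 1) (b l u : ℕ) :
    ∃ B : Fin (2 * l) ⊕ Fin (2 * u) → Matrix (Fin 2) (Fin 3) ℤ,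
      (∀ p i, ∑ j, B p i j = 0) ∧
      (∀ p : Fin (2 * l),
        ∑ i, B (Sum.inl p) i 0 = -2 ∧ ∑ i, B (Sum.inl p) i 1 = 1 ∧
        ∑ i, B (Sum.inl p) i 2 = 1) ∧
      (∀ p : Fin (2 * u),
        ∑ i, B (Sum.inr p) i 0 = -4 ∧ ∑ i, B (Sum.inr p) i 1 = 2 ∧
        ∑ i, B (Sum.inr p) i 2 = 2) ∧
      Function.Injective
        (fun q : (Fin (2 * l) ⊕ Fin (2 * u)) × Fin 2 × Fin 3 => |B q.1 q.2.1 q.2.2|) ∧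
      {x : ℤ | ∃ p i j, |B p i j| = x} =
        iSet 2 (2 * (b : ℤ) + 1) (2 * (b : ℤ) + 8 * (u : ℤ) + 8 * (l : ℤ) - 1) ∪
        iSet 1 (2 * (b : ℤ) + 8 * (u : ℤ) + 8 * (l : ℤ) + δ)
          (2 * (b : ℤ) + 12 * (u : ℤ) + 12 * (l : ℤ) + δ - 1) ∪
        iSet 1 (4 * (b : ℤ) + 12 * (u : ℤ) + 12 * (l : ℤ) + δ)
          (4 * (b : ℤ) + 16 * (u : ℤ) + 16 * (l : ℤ) + δ - 1) := by
  have hδ0 : 0 ≤ δ := by omega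
  refine ⟨familyB δ b l u, fun p => zeroRowSumMatrix_row_sum _ _ _, fun p => ?_, fun p => ?_,
    familyB_abs_injective hδ0 b l u, familyB_abs_range hδ0 b l u⟩
  · simpa [familyB] using zeroRowSumMatrix_col_sums _ _ 1
  · simpa [familyB] using zeroRowSumMatrix_col_sums _ _ 2
end
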